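/- arXiv:2312.14715 — 3 statements merged into one kernel-verified Lean document; each statement's English description precedes it below -/
import Mathlib

section
/- Let A be a real square matrix block-decomposed with m diagonal blocks such that all blocks are zero except the last block row A_{m,1}, ..., A_{m,m} and the last block column A_{1,m}, ..., A_{m,m} (i.e., A_{i,j} = 0 whenever i < m and j < m). If ρ(|A|) < 1, then ρ(|A_{m,m}| + Σ_{i=1}^{m-1} |A_{m,i} A_{i,m}|) < 1. -/
/-!
Write `B = |A|`. By Gelfand's formula, `ρ(B) < 1` gives `N > 0` with `‖Bᴺ‖_∞ < 1`, and then
`w = ∑_{t < N} Bᵗ 𝟙` is a positive vector with `B w < w` entrywise. Since the leading block of `B`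
vanishes, the first block row of `B w < w` reads `|A_{·,m}| u ≤ w₁`, where `u` is the last block
of `w`; substituting this into the last block row gives `(|A_{m,m}| + |A_{m,·}| |A_{·,m}|) u < u`.
The reduced matrix is entrywise below `|A_{m,m}| + |A_{m,·}| |A_{·,m}|`, and a nonnegative matrix
`M` with a positive vector `u` such that `M u < u` has spectral radius below one: for an
eigenvector `v`, compare `|v|` with `u` at an index maximising `|vᵢ| / uᵢ`.
-/

open Matrix Finset

/-- Spectral radius of a real square matrix: the supremum of the absolute values of its
complex eigenvalues (roots of the characteristic polynomial). -/
noncomputable def specRad {n : Type*} [Fintype n] [DecidableEq n] (A : Matrix n n ℝ) : ℝ :=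
  sSup {r : ℝ | ∃ μ : ℂ, ((A.map Complex.ofReal).charpoly).IsRoot μ ∧ r = ‖μ‖}

open Filter

theorem eventually_nnnorm_pow_lt_one_of_spectralRadius_lt_one {A : Type*} [NormedRing A]
    [NormedAlgebra ℂ A] [CompleteSpace A] {a : A} (h : spectralRadius ℂ a < 1) :
    ∀ᶠ N : ℕ in atTop, ‖a ^ N‖₊ < 1 := by
  have hgelfand := spectrum.pow_nnnorm_pow_one_div_tendsto_nhds_spectralRadius a
  filter_upwards [hgelfand.eventually_lt_const h, eventually_gt_atTop 0] with N hN hN₀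
  by_contra! h₁
  exact hN.not_ge (ENNReal.one_le_rpow (by exact_mod_cast h₁) (by positivity))

section NonnegMatrix

variable {n : Type*} [Fintype n]

theorem norm_lt_one_of_mulVec_eq_smul {M : Matrix n n ℝ} (hM : ∀ i j, 0 ≤ M i j) {w : n → ℝ}
    (hw : ∀ i, 0 < w i) (hMw : ∀ i, (M *ᵥ w) i < w i) {μ : ℂ} {v : n → ℂ} (hv : v ≠ 0)
    (hμ : M.map Complex.ofReal *ᵥ v = μ • v) : ‖μ‖ < 1 := by
  obtain ⟨j, hj⟩ := Function.ne_iff.1 hv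
  obtain ⟨i, -, hi⟩ := exists_max_image univ (fun i => ‖v i‖ / w i) ⟨j, mem_univ j⟩
  set c := ‖v i‖ / w i
  have hc : 0 < c := (div_pos (norm_pos_iff.2 hj) (hw j)).trans_le (hi j (mem_univ j))
  have hvc : ∀ j, ‖v j‖ ≤ c * w j := fun j => (div_le_iff₀ (hw j)).1 (hi j (mem_univ j))
  have hvi : ‖v i‖ = c * w i := (div_mul_cancel₀ _ (hw i).ne').symm
  have key : ‖μ‖ * (c * w i) < c * w i :=
    calc ‖μ‖ * (c * w i) = ‖∑ j, (M i j : ℂ) * v j‖ := by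
          rw [← hvi, ← norm_mul, ← smul_eq_mul, ← Pi.smul_apply, ← hμ]; rfl
      _ ≤ ∑ j, M i j * (c * w j) := by
          refine (norm_sum_le _ _).trans (sum_le_sum fun j _ => ?_)
          rw [norm_mul, Complex.norm_of_nonneg (hM i j)]
          exact mul_le_mul_of_nonneg_left (hvc j) (hM i j)
      _ = c * (M *ᵥ w) i := by
          simp only [mulVec, dotProduct, mul_sum]
          exact sum_congr rfl fun j _ => by ring
      _ < c * w i := mul_lt_mul_of_pos_left (hMw i) hc
  exact (mul_lt_iff_lt_one_left (mul_pos hc (hw i))).1 key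

variable [DecidableEq n]

theorem specRad_eq_sSup_norm_image_spectrum (A : Matrix n n ℝ) :
    specRad A = sSup ((‖·‖) '' spectrum ℂ (A.map Complex.ofReal)) := by
  simp only [specRad, Matrix.mem_spectrum_iff_isRoot_charpoly, Set.image, eq_comm]

theorem specRad_lt_iff {A : Matrix n n ℝ} {r : ℝ} (hr : 0 < r) :
    specRad A < r ↔ ∀ μ ∈ spectrum ℂ (A.map Complex.ofReal), ‖μ‖ < r := by
  have hfin : ((‖·‖) '' spectrum ℂ (A.map Complex.ofReal)).Finite := by
    refine (Set.Finite.subset ?_ fun μ => mem_spectrum_iff_isRoot_charpoly.1).image _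
    exact Polynomial.finite_setOfPred_isRoot (charpoly_monic _).ne_zero
  rw [specRad_eq_sSup_norm_image_spectrum]
  rcases ((‖·‖) '' spectrum ℂ (A.map Complex.ofReal)).eq_empty_or_nonempty with h | h
  · simp_all
  · rw [hfin.csSup_lt_iff h, Set.forall_mem_image]

theorem specRad_lt_one_of_mulVec_lt {M : Matrix n n ℝ} (hM : ∀ i j, 0 ≤ M i j) {w : n → ℝ}
    (hw : ∀ i, 0 < w i) (hMw : ∀ i, (M *ᵥ w) i < w i) : specRad M < 1 := by
  refine (specRad_lt_iff one_pos).2 fun μ hμ => ?_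
  rw [← spectrum_toLin', ← Module.End.hasEigenvalue_iff_mem_spectrum] at hμ
  obtain ⟨v, hv⟩ := hμ.exists_hasEigenvector
  exact norm_lt_one_of_mulVec_eq_smul hM hw hMw hv.2 (by simpa using hv.apply_eq_smul)

section LinftyOpNorm

attribute [local instance] Matrix.linftyOpNormedRing Matrix.linftyOpNormedAlgebra

theorem eventually_sum_abs_pow_lt_one_of_specRad_lt_one {B : Matrix n n ℝ} (h : specRad B < 1) :
    ∀ᶠ N : ℕ in atTop, ∀ i, ∑ j, |(B ^ N) i j| < 1 := by
  rcases isEmpty_or_nonempty n with _ | _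
  · exact .of_forall fun _ => isEmptyElim
  have hρ : spectralRadius ℂ (B.map Complex.ofReal) < 1 := by
    refine spectrum.spectralRadius_lt_of_forall_lt _ fun z hz => ?_
    exact_mod_cast (specRad_lt_iff one_pos).1 h z hz
  filter_upwards [eventually_nnnorm_pow_lt_one_of_spectralRadius_lt_one hρ] with N hN i
  have hpow : (B.map Complex.ofReal) ^ N = (B ^ N).map Complex.ofReal :=
    (map_pow Complex.ofRealHom.mapMatrix B N).symm
  have hrow : ∑ j, ‖((B ^ N).map Complex.ofReal) i j‖₊ ≤ ‖(B ^ N).map Complex.ofReal‖₊ := by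
    rw [linfty_opNNNorm_def]
    exact le_sup (f := fun i => ∑ j, ‖((B ^ N).map Complex.ofReal) i j‖₊) (mem_univ i)
  rw [hpow] at hN
  simpa [← NNReal.coe_lt_coe, Complex.nnnorm_real] using hrow.trans_lt hN

end LinftyOpNorm

theorem exists_pos_mulVec_lt_of_pow_mulVec_lt_one {B : Matrix n n ℝ} (hB : ∀ i j, 0 ≤ B i j)
    {N : ℕ} (hN : 0 < N) (hBN : ∀ i, (B ^ N *ᵥ 1) i < 1) :
    ∃ w : n → ℝ, (∀ i, 0 < w i) ∧ ∀ i, (B *ᵥ w) i < w i := by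
  set G := ∑ t ∈ range N, B ^ t
  have hBG : B * G = G + B ^ N - 1 := by
    rw [add_sub_assoc, ← mul_geom_sum, sub_mul, one_mul, add_sub_cancel]
  refine ⟨G *ᵥ 1, fun i => ?_, fun i => ?_⟩
  · obtain ⟨N, rfl⟩ := Nat.exists_eq_add_of_lt hN
    have hG : G = ∑ t ∈ range N, B ^ (t + 1) + 1 := by simp [G, sum_range_succ']
    have hpow : ∀ t, 0 ≤ (B ^ t *ᵥ 1) i := fun t =>
      sum_nonneg fun j _ => by simpa using pow_apply_nonneg hB t i j
    simp only [hG, add_mulVec, sum_mulVec, one_mulVec, Pi.add_apply, Finset.sum_apply,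
      Pi.one_apply]
    exact add_pos_of_nonneg_of_pos (sum_nonneg fun t _ => hpow _) one_pos
  · have := hBN i
    rw [mulVec_mulVec, hBG, sub_mulVec, add_mulVec, one_mulVec]
    simp only [Pi.sub_apply, Pi.add_apply, Pi.one_apply]
    linarith

theorem exists_pos_mulVec_lt_of_specRad_lt_one {B : Matrix n n ℝ} (hB : ∀ i j, 0 ≤ B i j)
    (h : specRad B < 1) : ∃ w : n → ℝ, (∀ i, 0 < w i) ∧ ∀ i, (B *ᵥ w) i < w i := by
  obtain ⟨N, hBN, hN⟩ :=
    ((eventually_sum_abs_pow_lt_one_of_specRad_lt_one h).and (eventually_gt_atTop 0)).exists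
  refine exists_pos_mulVec_lt_of_pow_mulVec_lt_one hB hN fun i => ?_
  simpa [mulVec, dotProduct, abs_of_nonneg (pow_apply_nonneg hB N i _)] using hBN i

end NonnegMatrix

theorem mulVec_add_mul_lt_of_fromBlocks_zero {ι κ : Type*} [Fintype ι] [Fintype κ]
    {P : Matrix κ ι ℝ} {Q : Matrix ι κ ℝ} {R : Matrix κ κ ℝ} (hP : ∀ a c, 0 ≤ P a c)
    {w : ι ⊕ κ → ℝ} (hw : ∀ x, (fromBlocks 0 Q P R *ᵥ w) x < w x) (a : κ) :
    ((R + P * Q) *ᵥ (w ∘ Sum.inr)) a < w (Sum.inr a) := by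
  have hQ : ∀ c, (Q *ᵥ (w ∘ Sum.inr)) c ≤ w (Sum.inl c) := fun c => by
    simpa [fromBlocks_mulVec] using (hw (Sum.inl c)).le
  calc ((R + P * Q) *ᵥ (w ∘ Sum.inr)) a
      = (R *ᵥ (w ∘ Sum.inr)) a + (P *ᵥ (Q *ᵥ (w ∘ Sum.inr))) a := by
        rw [add_mulVec, ← mulVec_mulVec, Pi.add_apply]
    _ ≤ (R *ᵥ (w ∘ Sum.inr)) a + (P *ᵥ (w ∘ Sum.inl)) a := by
        gcongr
        exact sum_le_sum fun c _ => mul_le_mul_of_nonneg_left (hQ c) (hP a c)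
    _ = (fromBlocks 0 Q P R *ᵥ w) (Sum.inr a) := by simp [fromBlocks_mulVec, add_comm]
    _ < w (Sum.inr a) := hw _

/-- Let `A` be a square matrix block-decomposed with `m` diagonal blocks (here the first
`m - 1` blocks are indexed by `Σ i : Fin k, Fin (s i)` and the last block by `Fin q`) such
that `A_{i,j} = 0` whenever both `i < m` and `j < m`.  If `ρ(|A|) < 1` then
`ρ(|A_{m,m}| + ∑_{i=1}^{m-1} |A_{m,i} A_{i,m}|) < 1`. -/
theorem specRad_abs_block_arrow_reduction
    (k q : ℕ) (s : Fin k → ℕ)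
    (A : Matrix ((Σ i : Fin k, Fin (s i)) ⊕ Fin q) ((Σ i : Fin k, Fin (s i)) ⊕ Fin q) ℝ)
    (hzero : ∀ (i j : Fin k) (a : Fin (s i)) (b : Fin (s j)),
      A (Sum.inl ⟨i, a⟩) (Sum.inl ⟨j, b⟩) = 0)
    (hρ : specRad (Matrix.of fun x y => |A x y|) < 1) :
    specRad (Matrix.of fun a b : Fin q =>
        |A (Sum.inr a) (Sum.inr b)| +
          ∑ i : Fin k,
            |∑ c : Fin (s i), A (Sum.inr a) (Sum.inl ⟨i, c⟩) * A (Sum.inl ⟨i, c⟩) (Sum.inr b)|)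
      < 1 := by
  set B : Matrix _ _ ℝ := of fun x y => |A x y|
  obtain ⟨w, hw, hBw⟩ :=
    exists_pos_mulVec_lt_of_specRad_lt_one (B := B) (fun _ _ => abs_nonneg _) hρ
  have hB₁₁ : B.toBlocks₁₁ = 0 := by
    ext ⟨i, a⟩ ⟨j, b⟩
    simp [B, toBlocks₁₁, hzero]
  rw [← fromBlocks_toBlocks B, hB₁₁] at hBw
  have hred :=
    mulVec_add_mul_lt_of_fromBlocks_zero (P := B.toBlocks₂₁) (fun _ _ => abs_nonneg _) hBw
  refine specRad_lt_one_of_mulVec_lt (fun a b => by simp only [of_apply]; positivity)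
    (fun a => hw _) fun a => lt_of_le_of_lt ?_ (hred a)
  simp only [mulVec, dotProduct]
  refine sum_le_sum fun b _ => mul_le_mul_of_nonneg_right ?_ (hw _).le
  rw [Matrix.add_apply, mul_apply, Fintype.sum_sigma]
  simp only [toBlocks₂₂, toBlocks₂₁, toBlocks₁₂, of_apply, B]
  gcongr with i
  exact (abs_sum_le_sum_abs _ _).trans_eq (by simp [abs_mul])
end

section
/- Let A be a real 2×2-block square matrix A = [[0, A_{1,2}], [A_{2,1}, A_{2,2}]]. If ρ(|A|) < 1 then ρ(|A_{2,2}| + |A_{2,1} A_{1,2}|) < 1. -/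
/-!
A nonnegative matrix `B` has spectral radius `< 1` iff some positive vector `v` satisfies
`B v < v` entrywise. One direction is the Collatz–Wielandt bound: at an index maximising
`|w j| / v j` for an eigenvector `w`, the eigenvalue equation forces `|μ| < 1`. For the other,
Gelfand's formula gives `k` with `‖B ^ k‖∞ < 1`, and `v = (1 + B + ⋯ + B ^ (k-1)) 1` works since
`B v = v - 1 + B ^ k 1`.

For the block matrix, restricting such a `v` for `|A|` to the second block gives a positive `w`
with `|A₂₂| w + |A₂₁| u < w` and `|A₁₂| w ≤ u`, where `u` is the first block; since
`|A₂₁ A₁₂| ≤ |A₂₁| |A₁₂|` entrywise, `(|A₂₂| + |A₂₁ A₁₂|) w < w`.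
-/

open Matrix Finset

open Polynomial Filter

theorem spectrum.exists_nnnorm_pow_lt_one {A : Type*} [NormedRing A] [NormedAlgebra ℂ A]
    [CompleteSpace A] {a : A} (ha : spectralRadius ℂ a < 1) : ∃ k : ℕ, ‖a ^ k‖₊ < 1 := by
  obtain ⟨k, hk, hk_one⟩ := ((spectrum.pow_nnnorm_pow_one_div_tendsto_nhds_spectralRadius a
    |>.eventually_lt_const ha).and (eventually_ge_atTop 1)).exists
  refine ⟨k, ENNReal.coe_lt_one_iff.mp (lt_of_not_ge fun h => hk.not_ge ?_)⟩
  exact ENNReal.one_le_rpow h (by positivity)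

namespace Matrix

variable {m n : Type*} [Fintype n]

theorem specRad_lt_one_iff [DecidableEq n] (A : Matrix n n ℝ) :
    specRad A < 1 ↔ ∀ μ ∈ spectrum ℂ (A.map Complex.ofReal), ‖μ‖ < 1 := by
  have hspec :
      spectrum ℂ (A.map Complex.ofReal) = {μ | (A.map Complex.ofReal).charpoly.IsRoot μ} :=
    Set.ext fun μ => mem_spectrum_iff_isRoot_charpoly
  have hfin : (spectrum ℂ (A.map Complex.ofReal)).Finite :=
    hspec ▸ finite_setOfPred_isRoot (charpoly_monic _).ne_zero
  have hS : {r : ℝ | ∃ μ : ℂ, (A.map Complex.ofReal).charpoly.IsRoot μ ∧ r = ‖μ‖}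
      = (‖·‖) '' spectrum ℂ (A.map Complex.ofReal) := by
    ext r; simp [hspec, eq_comm]
  rw [specRad, hS]
  rcases (spectrum ℂ (A.map Complex.ofReal)).eq_empty_or_nonempty with h | h
  · simp [h]
  · simp [(hfin.image _).csSup_lt_iff (h.image _)]

theorem mulVec_le_mulVec_of_nonneg {M : Matrix m n ℝ} (hM : ∀ i j, 0 ≤ M i j) {x y : n → ℝ}
    (hxy : x ≤ y) : M *ᵥ x ≤ M *ᵥ y := fun i =>
  dotProduct_le_dotProduct_of_nonneg_left hxy (hM i)

theorem mulVec_le_mulVec_of_le {M N : Matrix m n ℝ} (hMN : ∀ i j, M i j ≤ N i j) {x : n → ℝ}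
    (hx : 0 ≤ x) : M *ᵥ x ≤ N *ᵥ x := fun i =>
  dotProduct_le_dotProduct_of_nonneg_right (hMN i) hx

theorem mulVec_nonneg {M : Matrix m n ℝ} (hM : ∀ i j, 0 ≤ M i j) {x : n → ℝ} (hx : 0 ≤ x) :
    0 ≤ M *ᵥ x := fun i =>
  dotProduct_nonneg_of_nonneg (hM i) hx

theorem exists_pos_mulVec_lt_of_pow_mulVec_one_lt [DecidableEq n] {B : Matrix n n ℝ}
    (hB : ∀ i j, 0 ≤ B i j) {k : ℕ} (hk : ∀ i, (B ^ k *ᵥ 1) i < 1) :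
    ∃ v : n → ℝ, (∀ i, 0 < v i) ∧ ∀ i, (B *ᵥ v) i < v i := by
  set S := ∑ j ∈ range k, B ^ j
  have hS : ∀ i j, 0 ≤ S i j := fun i j => by
    simpa only [S, Matrix.sum_apply] using sum_nonneg fun l _ => pow_apply_nonneg hB l i j
  have hBS : B * S = S + (B ^ k - 1) := by rw [← mul_geom_sum, sub_mul, one_mul]; abel
  have hlt : ∀ i, (B *ᵥ (S *ᵥ 1)) i < (S *ᵥ 1) i := fun i => by
    have := congrFun (congrArg (· *ᵥ (1 : n → ℝ)) hBS) i
    simp only [← mulVec_mulVec, add_mulVec, sub_mulVec, one_mulVec, Pi.add_apply, Pi.sub_apply,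
      Pi.one_apply] at this
    linarith [hk i]
  refine ⟨S *ᵥ 1, fun i => ?_, hlt⟩
  exact (mulVec_nonneg hB (mulVec_nonneg hS zero_le_one) i).trans_lt (hlt i)

theorem norm_lt_one_of_mem_spectrum_of_mulVec_lt [DecidableEq n] {C : Matrix n n ℝ}
    (hC : ∀ i j, 0 ≤ C i j) {v : n → ℝ} (hv : ∀ i, 0 < v i) (hCv : ∀ i, (C *ᵥ v) i < v i)
    {μ : ℂ} (hμ : μ ∈ spectrum ℂ (C.map Complex.ofReal)) : ‖μ‖ < 1 := by
  rw [← spectrum_toLin', ← Module.End.hasEigenvalue_iff_mem_spectrum] at hμ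
  obtain ⟨w, hw⟩ := hμ.exists_hasEigenvector
  have hCw : C.map Complex.ofReal *ᵥ w = μ • w := by simpa using hw.apply_eq_smul
  obtain ⟨j₀, hj₀⟩ := Function.ne_iff.mp hw.2
  obtain ⟨i, -, hi⟩ := exists_max_image univ (fun j => ‖w j‖ / v j) ⟨j₀, mem_univ _⟩
  set t := ‖w i‖ / v i
  have ht : 0 < t := (div_pos (norm_pos_iff.mpr hj₀) (hv j₀)).trans_le (hi j₀ (mem_univ _))
  have hwt (j : n) : ‖w j‖ ≤ t * v j := (div_le_iff₀ (hv j)).mp (hi j (mem_univ _))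
  have hwi : t * v i = ‖w i‖ := div_mul_cancel₀ _ (hv i).ne'
  have key : ‖μ‖ * ‖w i‖ < 1 * ‖w i‖ :=
    calc ‖μ‖ * ‖w i‖ = ‖∑ j, (C i j : ℂ) * w j‖ := by
          rw [← norm_mul, ← smul_eq_mul, ← Pi.smul_apply μ w i, ← hCw]; rfl
      _ ≤ ∑ j, C i j * ‖w j‖ := (norm_sum_le _ _).trans_eq <| sum_congr rfl fun j _ => by
          rw [norm_mul, Complex.norm_real, Real.norm_of_nonneg (hC i j)]
      _ ≤ ∑ j, C i j * (t * v j) := by gcongr with j; exact hC i j; exact hwt j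
      _ = t * (C *ᵥ v) i := by simp only [mulVec, dotProduct, mul_sum, mul_left_comm]
      _ < t * v i := mul_lt_mul_of_pos_left (hCv i) ht
      _ = 1 * ‖w i‖ := by rw [one_mul, hwi]
  exact lt_of_mul_lt_mul_right key (norm_nonneg _)

open scoped Matrix.Norms.Operator in
theorem exists_pos_mulVec_lt_of_forall_norm_lt_one [DecidableEq n] {B : Matrix n n ℝ}
    (hB : ∀ i j, 0 ≤ B i j) (h : ∀ μ ∈ spectrum ℂ (B.map Complex.ofReal), ‖μ‖ < 1) :
    ∃ v : n → ℝ, (∀ i, 0 < v i) ∧ ∀ i, (B *ᵥ v) i < v i := by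
  rcases isEmpty_or_nonempty n with hn | hn
  · exact ⟨0, isEmptyElim, isEmptyElim⟩
  have : CompleteSpace (Matrix n n ℂ) := FiniteDimensional.complete ℂ _
  have hρ : spectralRadius ℂ (B.map Complex.ofReal) < 1 := by
    simpa using spectrum.spectralRadius_lt_of_forall_lt (B.map Complex.ofReal) (r := 1)
      fun μ hμ => by simpa [← NNReal.coe_lt_coe] using h μ hμ
  obtain ⟨k, hk⟩ := spectrum.exists_nnnorm_pow_lt_one hρ
  refine exists_pos_mulVec_lt_of_pow_mulVec_one_lt hB (k := k) fun i => ?_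
  have hrow : ∑ j, ‖((B.map Complex.ofReal) ^ k) i j‖₊ ≤ ‖(B.map Complex.ofReal) ^ k‖₊ := by
    rw [linfty_opNNNorm_def]
    exact le_sup (f := fun i => ∑ j, ‖((B.map Complex.ofReal) ^ k) i j‖₊) (mem_univ i)
  have hpow : (B.map Complex.ofReal) ^ k = (B ^ k).map Complex.ofReal :=
    (map_pow Complex.ofRealHom.mapMatrix B k).symm
  calc (B ^ k *ᵥ 1) i = ∑ j, ‖((B.map Complex.ofReal) ^ k) i j‖₊ := by
        simp [hpow, mulVec, dotProduct, Real.norm_of_nonneg (pow_apply_nonneg hB k i _)]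
    _ < 1 := by exact_mod_cast hrow.trans_lt hk

theorem specRad_lt_one_iff_exists_pos_mulVec_lt [DecidableEq n] {B : Matrix n n ℝ}
    (hB : ∀ i j, 0 ≤ B i j) :
    specRad B < 1 ↔ ∃ v : n → ℝ, (∀ i, 0 < v i) ∧ ∀ i, (B *ᵥ v) i < v i := by
  rw [specRad_lt_one_iff]
  exact ⟨exists_pos_mulVec_lt_of_forall_norm_lt_one hB, fun ⟨v, hv, hBv⟩ _ hμ =>
    norm_lt_one_of_mem_spectrum_of_mulVec_lt hB hv hBv hμ⟩

theorem abs_mul_mulVec_le {l : Type*} [Fintype m] (P : Matrix l m ℝ) (Q : Matrix m n ℝ)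
    {w : n → ℝ} (hw : 0 ≤ w) :
    (P * Q).map abs *ᵥ w ≤ P.map abs *ᵥ (Q.map abs *ᵥ w) := by
  rw [mulVec_mulVec]
  refine mulVec_le_mulVec_of_le (fun i j => ?_) hw
  simpa only [map_apply, mul_apply, abs_mul] using
    abs_sum_le_sum_abs (fun k => P i k * Q k j) univ

theorem fromBlocks_zero_abs_mulVec_lt [Fintype m] {A₁₂ : Matrix m n ℝ} {A₂₁ : Matrix n m ℝ}
    {A₂₂ : Matrix n n ℝ} {v : m ⊕ n → ℝ} (hv : 0 ≤ v)
    (h : ∀ x, ((fromBlocks 0 A₁₂ A₂₁ A₂₂).map abs *ᵥ v) x < v x) (i : n) :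
    ((A₂₂.map abs + (A₂₁ * A₁₂).map abs) *ᵥ (v ∘ Sum.inr)) i < v (Sum.inr i) := by
  simp only [fromBlocks_map, abs_zero, Matrix.map_zero, fromBlocks_mulVec, zero_mulVec, zero_add]
    at h
  have h₁ : A₁₂.map abs *ᵥ (v ∘ Sum.inr) ≤ v ∘ Sum.inl := fun l => (h (Sum.inl l)).le
  have h₂ : (A₂₁.map abs *ᵥ (v ∘ Sum.inl)) i + (A₂₂.map abs *ᵥ (v ∘ Sum.inr)) i < v (Sum.inr i) :=
    h (Sum.inr i)
  calc _ = (A₂₂.map abs *ᵥ (v ∘ Sum.inr)) i + ((A₂₁ * A₁₂).map abs *ᵥ (v ∘ Sum.inr)) i := by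
        rw [add_mulVec, Pi.add_apply]
    _ ≤ (A₂₂.map abs *ᵥ (v ∘ Sum.inr)) i + (A₂₁.map abs *ᵥ (v ∘ Sum.inl)) i := by
        gcongr
        exact (abs_mul_mulVec_le A₂₁ A₁₂ fun b => hv (Sum.inr b)).trans
          (mulVec_le_mulVec_of_nonneg (fun _ _ => abs_nonneg _) h₁) i
    _ < v (Sum.inr i) := by linarith

end Matrix

/-- For a 2×2-block matrix `A = [[0, A₁₂], [A₂₁, A₂₂]]`, if `ρ(|A|) < 1` then
`ρ(|A₂₂| + |A₂₁ A₁₂|) < 1`. -/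
theorem specRad_abs_two_block_reduction
    (n1 n2 : ℕ)
    (A12 : Matrix (Fin n1) (Fin n2) ℝ) (A21 : Matrix (Fin n2) (Fin n1) ℝ)
    (A22 : Matrix (Fin n2) (Fin n2) ℝ)
    (hρ : specRad (Matrix.of fun x y =>
        |Matrix.fromBlocks (0 : Matrix (Fin n1) (Fin n1) ℝ) A12 A21 A22 x y|) < 1) :
    specRad (Matrix.of fun a b : Fin n2 => |A22 a b| + |(A21 * A12) a b|) < 1 := by
  obtain ⟨v, hv, hAv⟩ := (specRad_lt_one_iff_exists_pos_mulVec_lt fun _ _ => abs_nonneg _).mp hρ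
  have hC_nonneg (a b : Fin n2) : 0 ≤ |A22 a b| + |(A21 * A12) a b| := by positivity
  exact (specRad_lt_one_iff_exists_pos_mulVec_lt hC_nonneg).mpr
    ⟨v ∘ Sum.inr, fun i => hv _, fromBlocks_zero_abs_mulVec_lt (fun x => (hv x).le) hAv⟩
end

section
/- Let A = M - N be an H-splitting of a real square matrix A, i.e., M is nonsingular and ⟨M⟩ - |N| is an M-matrix, where ⟨M⟩ is the comparison matrix of M. Then ρ(|I - M^{-1}A|) < 1. -/
open Matrix Finset

/-- The comparison matrix `⟨M⟩`: diagonal entries `|mᵢᵢ|`, off-diagonal entries `-|mᵢⱼ|`. -/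
def compMat {n : Type*} [DecidableEq n] (M : Matrix n n ℝ) : Matrix n n ℝ :=
  Matrix.of fun i j => if i = j then |M i j| else -|M i j|

/-- An M-matrix: a nonsingular matrix with nonpositive off-diagonal entries and
entry-wise nonnegative inverse. -/
def IsMMatrix {n : Type*} [Fintype n] [DecidableEq n] (B : Matrix n n ℝ) : Prop :=
  IsUnit B.det ∧ (∀ i j, i ≠ j → B i j ≤ 0) ∧ (∀ i j, 0 ≤ B⁻¹ i j)

/-
Let `B = ⟨M⟩ - |N|` and `x = B⁻¹ 1`. Since `B⁻¹ ≥ 0` is invertible, `x > 0`, and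
`⟨M⟩ x = |N| x + 1` strictly dominates `|N| x`, so `|N| x ≤ θ ⟨M⟩ x` for some `θ < 1`.
Looking at a coordinate where `|z j| / x j` is maximal shows `|z| ≤ θ x` whenever
`|M z| ≤ θ ⟨M⟩ x`; with `z = M⁻¹ N w` for sign vectors `w` scaled by `x` this gives
`|M⁻¹ N| x ≤ θ x`. The same maximal-ratio argument applied to an eigenvector bounds every
eigenvalue of `|M⁻¹ N| = |I - M⁻¹ A|` by `θ`.
-/

section

variable {n : Type*} [Fintype n]

lemma exists_forall_le_div_mul (f : n → ℝ) {x : n → ℝ} (hx : ∀ i, 0 < x i) (j₀ : n) :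
    ∃ i, ∀ j, f j ≤ f i / x i * x j := by
  obtain ⟨i, -, hi⟩ := exists_max_image univ (fun j => f j / x j) ⟨j₀, mem_univ j₀⟩
  exact ⟨i, fun j => (div_le_iff₀ (hx j)).mp (hi j (mem_univ j))⟩

lemma exists_lt_one_forall_le_mul {a b : n → ℝ} (ha : ∀ i, 0 ≤ a i) (hab : ∀ i, a i < b i) :
    ∃ θ, 0 ≤ θ ∧ θ < 1 ∧ ∀ i, a i ≤ θ * b i := by
  rcases isEmpty_or_nonempty n with _ | ⟨⟨k₀⟩⟩
  · exact ⟨0, le_rfl, zero_lt_one, isEmptyElim⟩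
  obtain ⟨k, hk⟩ := exists_forall_le_div_mul a (fun i => (ha i).trans_lt (hab i)) k₀
  have hbk : 0 < b k := (ha k).trans_lt (hab k)
  exact ⟨a k / b k, div_nonneg (ha k) hbk.le, (div_lt_one hbk).mpr (hab k), hk⟩

lemma exists_abs_le_mulVec_apply_eq_sum (T : Matrix n n ℝ) {x : n → ℝ} (hx : ∀ j, 0 ≤ x j)
    (i : n) : ∃ w : n → ℝ, (∀ j, |w j| ≤ x j) ∧ (T *ᵥ w) i = ∑ j, |T i j| * x j := by
  refine ⟨fun j => SignType.sign (T i j) * x j, fun j => ?_, ?_⟩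
  · rw [abs_mul, abs_of_nonneg (hx j)]
    refine mul_le_of_le_one_left (hx j) ?_
    rcases lt_trichotomy (T i j) 0 with h | h | h <;> simp [h]
  · simp only [mulVec, dotProduct, ← mul_assoc, self_mul_sign]

variable [DecidableEq n]

lemma Matrix.inv_mulVec_one_pos {B : Matrix n n ℝ} (hB : IsUnit B.det)
    (hinv : ∀ i j, 0 ≤ B⁻¹ i j) (i : n) : 0 < (B⁻¹ *ᵥ fun _ => 1) i := by
  have hsum : (B⁻¹ *ᵥ fun _ => 1) i = ∑ j, B⁻¹ i j := by simp [mulVec, dotProduct]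
  rw [hsum]
  refine (sum_nonneg fun j _ => hinv i j).lt_of_ne fun h => ?_
  have hrow : ∀ j, B⁻¹ i j = 0 := fun j =>
    (sum_eq_zero_iff_of_nonneg fun j _ => hinv i j).mp h.symm j (mem_univ j)
  have hii := congrFun (congrFun (nonsing_inv_mul B hB) i) i
  simp [mul_apply, hrow] at hii

lemma compMat_mulVec_apply (M : Matrix n n ℝ) (x : n → ℝ) (i : n) :
    (compMat M *ᵥ x) i = |M i i| * x i - ∑ j ∈ univ.erase i, |M i j| * x j := by
  rw [mulVec, dotProduct, ← add_sum_erase _ _ (mem_univ i), sub_eq_add_neg, ← sum_neg_distrib]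
  congr 1
  · simp [compMat]
  · refine sum_congr rfl fun j hj => ?_
    simp [compMat, Ne.symm (ne_of_mem_erase hj)]

lemma mul_compMat_mulVec_le_abs_mulVec (M : Matrix n n ℝ) {x z : n → ℝ} {t : ℝ} {i : n}
    (hz : ∀ j, |z j| ≤ t * x j) (hzi : |z i| = t * x i) :
    t * (compMat M *ᵥ x) i ≤ |(M *ᵥ z) i| := by
  have hsplit : (M *ᵥ z) i = M i i * z i + ∑ j ∈ univ.erase i, M i j * z j := by
    rw [mulVec, dotProduct, ← add_sum_erase _ _ (mem_univ i)]
  have hoff : |∑ j ∈ univ.erase i, M i j * z j| ≤ t * ∑ j ∈ univ.erase i, |M i j| * x j :=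
    calc |∑ j ∈ univ.erase i, M i j * z j| ≤ ∑ j ∈ univ.erase i, |M i j| * |z j| := by
          simpa only [abs_mul] using abs_sum_le_sum_abs (fun j => M i j * z j) _
      _ ≤ ∑ j ∈ univ.erase i, |M i j| * (t * x j) :=
          sum_le_sum fun j _ => mul_le_mul_of_nonneg_left (hz j) (abs_nonneg _)
      _ = t * ∑ j ∈ univ.erase i, |M i j| * x j := by
          rw [mul_sum]; exact sum_congr rfl fun j _ => by ring
  have hdiag : |M i i * z i| ≤ |(M *ᵥ z) i| + |∑ j ∈ univ.erase i, M i j * z j| :=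
    calc |M i i * z i| = |(M *ᵥ z) i - ∑ j ∈ univ.erase i, M i j * z j| := by
          rw [hsplit, add_sub_cancel_right]
      _ ≤ _ := abs_sub _ _
  rw [abs_mul, hzi] at hdiag
  rw [compMat_mulVec_apply, mul_sub]
  linarith

lemma abs_le_of_abs_mulVec_le_compMat_mulVec {M : Matrix n n ℝ} {x z : n → ℝ} {θ : ℝ}
    (hx : ∀ i, 0 < x i) (hMx : ∀ i, 0 < (compMat M *ᵥ x) i)
    (hz : ∀ i, |(M *ᵥ z) i| ≤ θ * (compMat M *ᵥ x) i) (j : n) : |z j| ≤ θ * x j := by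
  obtain ⟨i, hi⟩ := exists_forall_le_div_mul (fun j => |z j|) hx j
  set t := |z i| / x i
  have htθ : t ≤ θ := le_of_mul_le_mul_right
    ((mul_compMat_mulVec_le_abs_mulVec M hi (div_mul_cancel₀ _ (hx i).ne').symm).trans (hz i))
    (hMx i)
  exact (hi j).trans (mul_le_mul_of_nonneg_right htθ (hx j).le)

lemma sum_abs_inv_mul_apply_mul_le {M N : Matrix n n ℝ} (hM : IsUnit M.det) {x : n → ℝ}
    {θ : ℝ} (hx : ∀ i, 0 < x i) (hMx : ∀ i, 0 < (compMat M *ᵥ x) i)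
    (hN : ∀ i, ∑ j, |N i j| * x j ≤ θ * (compMat M *ᵥ x) i) (i : n) :
    ∑ j, |(M⁻¹ * N) i j| * x j ≤ θ * x i := by
  obtain ⟨w, hw, hTw⟩ := exists_abs_le_mulVec_apply_eq_sum (M⁻¹ * N) (fun j => (hx j).le) i
  have hNw : ∀ k, |(M *ᵥ ((M⁻¹ * N) *ᵥ w)) k| ≤ θ * (compMat M *ᵥ x) k := fun k =>
    calc |(M *ᵥ ((M⁻¹ * N) *ᵥ w)) k| = |(N *ᵥ w) k| := by
          rw [mulVec_mulVec, mul_nonsing_inv_cancel_left M N hM]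
      _ = |∑ j, N k j * w j| := rfl
      _ ≤ ∑ j, |N k j| * x j := by
          refine (abs_sum_le_sum_abs _ _).trans (sum_le_sum fun j _ => ?_)
          rw [abs_mul]; exact mul_le_mul_of_nonneg_left (hw j) (abs_nonneg _)
      _ ≤ θ * (compMat M *ᵥ x) k := hN k
  rw [← hTw]
  exact (le_abs_self _).trans (abs_le_of_abs_mulVec_le_compMat_mulVec hx hMx hNw i)

lemma Matrix.exists_mulVec_eq_smul_of_isRoot_charpoly {K : Type*} [Field K] (C : Matrix n n K)
    {μ : K} (hμ : C.charpoly.IsRoot μ) : ∃ v : n → K, v ≠ 0 ∧ C *ᵥ v = μ • v := by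
  rw [← charpoly_toLin', ← Module.End.hasEigenvalue_iff_isRoot_charpoly] at hμ
  obtain ⟨v, hv⟩ := hμ.exists_hasEigenvector
  exact ⟨v, hv.2, Module.End.mem_eigenspace_iff.mp hv.1⟩

lemma norm_le_of_isRoot_charpoly_map_ofReal {D : Matrix n n ℝ} {x : n → ℝ} {θ : ℝ}
    (hx : ∀ i, 0 < x i) (hD : ∀ i, ∑ j, |D i j| * x j ≤ θ * x i) {μ : ℂ}
    (hμ : (D.map Complex.ofReal).charpoly.IsRoot μ) : ‖μ‖ ≤ θ := by
  obtain ⟨v, hv0, hv⟩ := exists_mulVec_eq_smul_of_isRoot_charpoly _ hμ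
  obtain ⟨k, hk⟩ := Function.ne_iff.mp hv0
  obtain ⟨i, hi⟩ := exists_forall_le_div_mul (fun j => ‖v j‖) hx k
  set t := ‖v i‖ / x i
  have hvi : ‖v i‖ = t * x i := (div_mul_cancel₀ _ (hx i).ne').symm
  have ht : 0 < t := (pos_iff_pos_of_mul_pos ((norm_pos_iff.mpr hk).trans_le (hi k))).mpr (hx k)
  have hbound : ‖μ‖ * (t * x i) ≤ θ * (t * x i) :=
    calc ‖μ‖ * (t * x i) = ‖(D.map Complex.ofReal *ᵥ v) i‖ := by
          rw [hv, Pi.smul_apply, smul_eq_mul, norm_mul, hvi]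
      _ ≤ ∑ j, |D i j| * ‖v j‖ :=
          (norm_sum_le _ _).trans_eq (by simp [Complex.norm_real])
      _ ≤ ∑ j, |D i j| * (t * x j) := by gcongr with j; exact hi j
      _ = t * ∑ j, |D i j| * x j := by
          rw [mul_sum]; exact sum_congr rfl fun j _ => by ring
      _ ≤ t * (θ * x i) := by gcongr; exact hD i
      _ = θ * (t * x i) := by ring
  exact le_of_mul_le_mul_right hbound (mul_pos ht (hx i))

lemma specRad_le_of_sum_abs_mul_le {D : Matrix n n ℝ} {x : n → ℝ} {θ : ℝ}
    (hx : ∀ i, 0 < x i) (hD : ∀ i, ∑ j, |D i j| * x j ≤ θ * x i) (hθ : 0 ≤ θ) :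
    specRad D ≤ θ :=
  Real.sSup_le (by rintro r ⟨μ, hμ, rfl⟩; exact norm_le_of_isRoot_charpoly_map_ofReal hx hD hμ) hθ

end

/-- If `A = M - N` is an H-splitting (`M` nonsingular and `⟨M⟩ - |N|` an M-matrix), then
`ρ(|I - M⁻¹ A|) < 1`. -/
theorem h_splitting_spectral_radius_lt_one
    {n : Type*} [Fintype n] [DecidableEq n]
    (A M N : Matrix n n ℝ)
    (hMN : A = M - N)
    (hM : IsUnit M.det)
    (hH : IsMMatrix (compMat M - Matrix.of fun i j => |N i j|)) :
    specRad (Matrix.of fun i j => |((1 : Matrix n n ℝ) - M⁻¹ * A) i j|) < 1 := by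
  obtain ⟨hBdet, -, hBinv⟩ := hH
  set B := compMat M - Matrix.of fun i j => |N i j|
  set x : n → ℝ := B⁻¹ *ᵥ fun _ => 1
  have hx : ∀ i, 0 < x i := inv_mulVec_one_pos hBdet hBinv
  have hMx : ∀ i, (compMat M *ᵥ x) i = ∑ j, |N i j| * x j + 1 := fun i => by
    have hBx := congrFun (show B *ᵥ x = fun _ => 1 by
      rw [mulVec_mulVec, mul_nonsing_inv B hBdet, one_mulVec]) i
    simp only [B, sub_mulVec, Pi.sub_apply] at hBx
    simp only [mulVec, dotProduct, of_apply] at hBx ⊢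
    linarith
  have hNx : ∀ i, 0 ≤ ∑ j, |N i j| * x j := fun i =>
    sum_nonneg fun j _ => mul_nonneg (abs_nonneg _) (hx j).le
  obtain ⟨θ, hθ0, hθ1, hθ⟩ := exists_lt_one_forall_le_mul hNx
    (b := compMat M *ᵥ x) fun i => by rw [hMx]; linarith
  have hT : 1 - M⁻¹ * A = M⁻¹ * N := by
    rw [hMN, Matrix.mul_sub, nonsing_inv_mul M hM]; abel
  refine (specRad_le_of_sum_abs_mul_le hx (fun i => ?_) hθ0).trans_lt hθ1
  simp only [of_apply, abs_abs, hT]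
  exact sum_abs_inv_mul_apply_mul_le hM hx (fun i => by linarith [hMx i, hNx i]) hθ i
end
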